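/- arXiv:1105.2927 — 5 statements merged into one kernel-verified Lean document; each statement's English description precedes it below -/
import Mathlib

section
/- Fix k ≥ 1 and a nonincreasing sequence of integers N_1 ≥ N_2 ≥ ... ≥ N_k ≥ 0, with the convention N_{k+1} = 0. For p ∈ {0,1}^k define l_p(q) = q^{∑_{i=1}^k p_i N_i} and δ_p(q) = ∏_{i=1}^k (1 - [p_i = 0 and p_{i+1} = 1] · q^{N_i - N_{i+1}}) (with p_{k+1} := 0). Define the partial order p' ≤ p on binary k-tuples with equal number of ones by: ∑_{i=1}^j p'_i ≥ ∑_{i=1}^j p_i for all j. Then for every p ∈ {0,1}^k, as polynomials in q: l_p(q) = ∑_{p' ≤ p, p' ∈ {0,1}^k with the same number of ones as p} l_{p'}(q) · δ_{p'}(q). -/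
open Finset Polynomial

/-- Value of a binary `k`-tuple at 1-based position `i`, with value `0` outside `1..k`
(encoding the conventions `p₀ = 0` and `p_{k+1} = 0`). -/
def ext' (k : ℕ) (p : Fin k → Fin 2) (i : ℕ) : ℕ :=
  if h : 1 ≤ i ∧ i ≤ k then (p ⟨i - 1, by omega⟩ : ℕ) else 0

/-- Number of ones of a binary tuple. -/
def onesCount (k : ℕ) (p : Fin k → Fin 2) : ℕ := ∑ i : Fin k, (p i : ℕ)

/-- The partial order: `p1 ≤ p2` iff every initial partial sum of `p1` is ≥ that of `p2`. -/
def tle (k : ℕ) (p1 p2 : Fin k → Fin 2) : Prop :=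
  ∀ j ∈ Finset.Icc 1 k,
    ∑ i ∈ Finset.Icc 1 j, ext' k p2 i ≤ ∑ i ∈ Finset.Icc 1 j, ext' k p1 i

instance (k : ℕ) (p1 p2 : Fin k → Fin 2) : Decidable (tle k p1 p2) := by
  unfold tle; infer_instance

/-- `l_p(q) = q^{∑ p_i N_i}` as a polynomial in `q = X` over `ℤ`. -/
noncomputable def lTerm (k : ℕ) (N : ℕ → ℕ) (p : Fin k → Fin 2) : Polynomial ℤ :=
  Polynomial.X ^ (∑ i ∈ Finset.Icc 1 k, ext' k p i * N i)

/-- `δ¹_p(q)`: factors read from the right neighbour, convention `p_{k+1} = 0`. -/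
noncomputable def deltaR (k : ℕ) (N : ℕ → ℕ) (p : Fin k → Fin 2) : Polynomial ℤ :=
  ∏ i ∈ Finset.Icc 1 k,
    (1 - if ext' k p i = 0 ∧ ext' k p (i + 1) = 1
         then Polynomial.X ^ (N i - N (i + 1)) else 0)

/-- `δ²_p(q)`: factors read from the left neighbour, conventions `p₀ = 0`, `N₀ = 0`. -/
noncomputable def deltaL (k : ℕ) (N : ℕ → ℕ) (p : Fin k → Fin 2) : Polynomial ℤ :=
  ∏ i ∈ Finset.Icc 1 k,
    (1 - if ext' k p i = 0 ∧ ext' k p (i - 1) = 1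
         then Polynomial.X ^ (N i - N (i - 1)) else 0)

/-- `g_i^1(p)`: change the last `i` ones of `p` (largest positions) into zeros. -/
def g1 (k i : ℕ) (p : Fin k → Fin 2) : Fin k → Fin 2 := fun m =>
  if p m = 1 ∧ (Finset.univ.filter (fun n => m ≤ n ∧ p n = 1)).card ≤ i then 0 else p m

/-- `g_i^0(p)`: change the last `i` zeros of `p` (largest positions) into ones. -/
def g0 (k i : ℕ) (p : Fin k → Fin 2) : Fin k → Fin 2 := fun m =>
  if p m = 0 ∧ (Finset.univ.filter (fun n => m ≤ n ∧ p n = 0)).card ≤ i then 1 else p m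

/-- `f_i^1(p)`: change the first `i` ones of `p` (smallest positions) into zeros. -/
def f1 (k i : ℕ) (p : Fin k → Fin 2) : Fin k → Fin 2 := fun m =>
  if p m = 1 ∧ (Finset.univ.filter (fun n => n ≤ m ∧ p n = 1)).card ≤ i then 0 else p m

/-- `f_i^0(p)`: change the first `i` zeros of `p` (smallest positions) into ones. -/
def f0 (k i : ℕ) (p : Fin k → Fin 2) : Fin k → Fin 2 := fun m =>
  if p m = 0 ∧ (Finset.univ.filter (fun n => n ≤ m ∧ p n = 0)).card ≤ i then 1 else p m

/-- Coordinatewise complement of a binary tuple. -/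
def compl' (k : ℕ) (p : Fin k → Fin 2) : Fin k → Fin 2 := fun m => 1 - p m

/-- 1-based position of the `j`-th one of `p`. -/
noncomputable def pos1 (k j : ℕ) (p : Fin k → Fin 2) : ℕ :=
  sInf {m | ext' k p m = 1 ∧ ∑ i ∈ Finset.Icc 1 m, ext' k p i = j}

/-- 1-based position of the `j`-th zero of `p`. -/
noncomputable def pos0 (k j : ℕ) (p : Fin k → Fin 2) : ℕ :=
  sInf {m | 1 ≤ m ∧ m ≤ k ∧ ext' k p m = 0 ∧
    ∑ i ∈ Finset.Icc 1 m, (1 - ext' k p i) = j}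

open Matrix

/-!
Expanding `δ_{p'}` over the descents `i` of `p'` (`p'_i = 0`, `p'_{i+1} = 1`) and using
`N_i ≥ N_{i+1}` writes `l_{p'} δ_{p'}` as `∑_T (-1)^{|T|} l_{p''}`, where `T` runs over sets of
descents and `p''` is `p'` with each descent in `T` turned into an ascent `10`. This raises the
prefix sums exactly at the positions in `T`, so `(p', T) ↦ (p'', T)` is a bijection onto the pairs
`(q, T)` with `q ≤ p` and `T` a set of ascents of `q` at which the prefix sum of `q` exceeds that
of `p`. The right-hand side becomes `∑_{q ≤ p} l_q ∑_T (-1)^{|T|}`, and the inner sum vanishes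
unless `q` has no such ascent. For `q ≠ p` there is one: the last position `j` with `q_j = 1` at
which `q` is strictly ahead of `p`.
-/

namespace TelescopingIdentity

variable {k : ℕ}

def prefixSum (k : ℕ) (p : Fin k → Fin 2) (j : ℕ) : ℕ := ∑ i ∈ Icc 1 j, ext' k p i

lemma ext'_le_one (p : Fin k → Fin 2) (i : ℕ) : ext' k p i ≤ 1 := by
  unfold ext'
  split
  · exact Nat.lt_succ_iff.mp (Fin.is_lt _)
  · exact zero_le_one

lemma ext'_eq_zero (p : Fin k → Fin 2) {i : ℕ} (h : i = 0 ∨ k < i) : ext' k p i = 0 := by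
  rw [ext', dif_neg (by omega)]

lemma ext'_succ (p : Fin k → Fin 2) (m : Fin k) : ext' k p (m + 1) = p m := by
  simp [ext']

lemma prefixSum_zero (p : Fin k → Fin 2) : prefixSum k p 0 = 0 := by
  simp [prefixSum]

lemma prefixSum_succ (p : Fin k → Fin 2) (j : ℕ) :
    prefixSum k p (j + 1) = prefixSum k p j + ext' k p (j + 1) :=
  sum_Icc_succ_top (by omega) _

lemma onesCount_eq_prefixSum (p : Fin k → Fin 2) : onesCount k p = prefixSum k p k := by
  simp_rw [onesCount, prefixSum, ← ext'_succ p]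
  rw [Fin.sum_univ_eq_sum_range (fun i => ext' k p (i + 1)), range_eq_Ico, sum_Ico_add',
    Ico_add_one_right_eq_Icc, zero_add]

lemma eq_of_prefixSum_eq {p q : Fin k → Fin 2}
    (h : ∀ j ≤ k, prefixSum k q j = prefixSum k p j) : q = p := by
  funext m
  have hsucc := h (m + 1) m.isLt
  rw [prefixSum_succ, prefixSum_succ, h m m.isLt.le, ext'_succ, ext'_succ] at hsucc
  exact Fin.ext (by omega)

lemma tle_iff {p q : Fin k → Fin 2} :
    tle k q p ↔ ∀ j ≤ k, prefixSum k p j ≤ prefixSum k q j := by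
  refine ⟨fun h j hj => ?_, fun h j hj => h j (mem_Icc.1 hj).2⟩
  rcases Nat.eq_zero_or_pos j with rfl | hpos
  · simp [prefixSum_zero]
  · exact h j (mem_Icc.2 ⟨hpos, hj⟩)

/-- `T` holds 1-based positions `i`: entry `i` is overwritten by `a` and entry `i + 1` by `b`. -/
def writePairs (k : ℕ) (a b : Fin 2) (T : Finset ℕ) (p : Fin k → Fin 2) : Fin k → Fin 2 :=
  fun m => if (m : ℕ) + 1 ∈ T then a else if (m : ℕ) ∈ T then b else p m

lemma ext'_writePairs (a b : Fin 2) (T : Finset ℕ) (p : Fin k → Fin 2) {i : ℕ} (h1 : 1 ≤ i)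
    (h2 : i ≤ k) :
    ext' k (writePairs k a b T p) i =
      if i ∈ T then (a : ℕ) else if i - 1 ∈ T then (b : ℕ) else ext' k p i := by
  obtain ⟨m, rfl⟩ : ∃ m : Fin k, i = m + 1 := ⟨⟨i - 1, by omega⟩, (Nat.sub_add_cancel h1).symm⟩
  simp only [ext'_succ, writePairs, add_tsub_cancel_right]
  split_ifs <;> rfl

lemma writePairs_writePairs {a b : Fin 2} {T : Finset ℕ} {p : Fin k → Fin 2}
    (h : ∀ i ∈ T, ext' k p i = b ∧ ext' k p (i + 1) = a) :
    writePairs k b a T (writePairs k a b T p) = p := by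
  funext m
  simp only [writePairs]
  split_ifs with h1 h2
  · exact Fin.ext ((ext'_succ p m).symm.trans (h _ h1).1).symm
  · exact Fin.ext ((ext'_succ p m).symm.trans (h _ h2).2).symm
  · rfl

lemma ext'_writePairs_of_mem {a b : Fin 2} {T : Finset ℕ} {p : Fin k → Fin 2} {i : ℕ}
    (hi : i ∈ T) (hadj : i + 1 ∉ T) (h1 : 1 ≤ i) (h2 : i < k) :
    ext' k (writePairs k a b T p) i = a ∧ ext' k (writePairs k a b T p) (i + 1) = b := by
  rw [ext'_writePairs a b T p h1 h2.le, ext'_writePairs a b T p (by omega) h2]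
  simp [hi, hadj]

def descents (k : ℕ) (p : Fin k → Fin 2) : Finset ℕ :=
  (Icc 1 k).filter fun i => ext' k p i = 0 ∧ ext' k p (i + 1) = 1

def ascents (k : ℕ) (p : Fin k → Fin 2) : Finset ℕ :=
  (Ico 1 k).filter fun i => ext' k p i = 1 ∧ ext' k p (i + 1) = 0

lemma mem_descents {p : Fin k → Fin 2} {i : ℕ} :
    i ∈ descents k p ↔ 1 ≤ i ∧ i < k ∧ ext' k p i = 0 ∧ ext' k p (i + 1) = 1 := by
  simp only [descents, mem_filter, mem_Icc]
  refine ⟨fun ⟨⟨h1, h2⟩, h3, h4⟩ => ⟨h1, ?_, h3, h4⟩, fun ⟨h1, h2, h3, h4⟩ => ⟨⟨h1, h2.le⟩, h3, h4⟩⟩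
  by_contra hk
  rw [ext'_eq_zero p (by omega)] at h4
  exact zero_ne_one h4

lemma mem_ascents {p : Fin k → Fin 2} {i : ℕ} :
    i ∈ ascents k p ↔ 1 ≤ i ∧ i < k ∧ ext' k p i = 1 ∧ ext' k p (i + 1) = 0 := by
  simp only [ascents, mem_filter, mem_Ico, and_assoc]

lemma succ_notMem_of_subset_descents {T : Finset ℕ} {p : Fin k → Fin 2}
    (hT : T ⊆ descents k p) {i : ℕ} (hi : i ∈ T) : i + 1 ∉ T := fun h => by
  have h1 := (mem_descents.1 (hT hi)).2.2.2
  have h0 := (mem_descents.1 (hT h)).2.2.1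
  omega

lemma succ_notMem_of_subset_ascents {T : Finset ℕ} {q : Fin k → Fin 2}
    (hT : T ⊆ ascents k q) {i : ℕ} (hi : i ∈ T) : i + 1 ∉ T := fun h => by
  have h0 := (mem_ascents.1 (hT hi)).2.2.2
  have h1 := (mem_ascents.1 (hT h)).2.2.1
  omega

lemma subset_ascents_writePairs {T : Finset ℕ} {p : Fin k → Fin 2} (hT : T ⊆ descents k p) :
    T ⊆ ascents k (writePairs k 1 0 T p) := by
  intro i hi
  obtain ⟨h1, h2, -⟩ := mem_descents.1 (hT hi)
  exact mem_ascents.2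
    ⟨h1, h2, ext'_writePairs_of_mem hi (succ_notMem_of_subset_descents hT hi) h1 h2⟩

lemma subset_descents_writePairs {T : Finset ℕ} {q : Fin k → Fin 2} (hT : T ⊆ ascents k q) :
    T ⊆ descents k (writePairs k 0 1 T q) := by
  intro i hi
  obtain ⟨h1, h2, -⟩ := mem_ascents.1 (hT hi)
  exact mem_descents.2
    ⟨h1, h2, ext'_writePairs_of_mem hi (succ_notMem_of_subset_ascents hT hi) h1 h2⟩

lemma writePairs_writePairs_of_subset_descents {T : Finset ℕ} {p : Fin k → Fin 2}
    (hT : T ⊆ descents k p) : writePairs k 0 1 T (writePairs k 1 0 T p) = p :=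
  writePairs_writePairs fun _ hi => (mem_descents.1 (hT hi)).2.2

lemma writePairs_writePairs_of_subset_ascents {T : Finset ℕ} {q : Fin k → Fin 2}
    (hT : T ⊆ ascents k q) : writePairs k 1 0 T (writePairs k 0 1 T q) = q :=
  writePairs_writePairs fun _ hi => (mem_ascents.1 (hT hi)).2.2

lemma prefixSum_writePairs {T : Finset ℕ} {p : Fin k → Fin 2} (hT : T ⊆ descents k p) {j : ℕ}
    (hj : j ≤ k) :
    prefixSum k (writePairs k 1 0 T p) j = prefixSum k p j + if j ∈ T then 1 else 0 := by
  induction j with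
  | zero =>
    have h0 : 0 ∉ T := fun h => by have := (mem_descents.1 (hT h)).1; omega
    simp [prefixSum_zero, h0]
  | succ j ih =>
    rw [prefixSum_succ, prefixSum_succ, ih (by omega), ext'_writePairs 1 0 T p (by omega) hj,
      add_tsub_cancel_right]
    by_cases h1 : j + 1 ∈ T
    · have h0 : j ∉ T := fun h => succ_notMem_of_subset_descents hT h h1
      simp [h1, h0, (mem_descents.1 (hT h1)).2.2.1]
    · by_cases h0 : j ∈ T
      · simp [h1, h0, (mem_descents.1 (hT h0)).2.2.2]
      · simp [h1, h0]

lemma prefixSum_writePairs_of_subset_ascents {T : Finset ℕ} {q : Fin k → Fin 2}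
    (hT : T ⊆ ascents k q) {j : ℕ} (hj : j ≤ k) :
    prefixSum k (writePairs k 0 1 T q) j + (if j ∈ T then 1 else 0) = prefixSum k q j := by
  have h := prefixSum_writePairs (subset_descents_writePairs hT) hj
  rw [writePairs_writePairs_of_subset_ascents hT] at h
  exact h.symm

lemma sum_ext'_mul_writePairs (N : ℕ → ℕ) {T : Finset ℕ} {p : Fin k → Fin 2}
    (hT : T ⊆ descents k p) :
    ∑ i ∈ Icc 1 k, ext' k (writePairs k 1 0 T p) i * N i + ∑ i ∈ T, N (i + 1) =
      ∑ i ∈ Icc 1 k, ext' k p i * N i + ∑ i ∈ T, N i := by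
  have hTsub : T ⊆ Icc 1 k := fun i hi => by
    obtain ⟨h1, h2, -⟩ := mem_descents.1 (hT hi)
    exact mem_Icc.2 ⟨h1, h2.le⟩
  have hself : ∑ i ∈ T, N i = ∑ i ∈ Icc 1 k, if i ∈ T then N i else 0 := by
    rw [sum_ite_mem, inter_eq_right.2 hTsub]
  have hshift : ∑ i ∈ T, N (i + 1) = ∑ i ∈ Icc 1 k, if i - 1 ∈ T then N i else 0 := by
    rw [← sum_filter]
    refine sum_nbij' (· + 1) (· - 1) (fun i hi => ?_) (fun i hi => ?_) (fun i _ => rfl)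
      (fun i hi => ?_) (fun i _ => rfl)
    · obtain ⟨h1, h2, -⟩ := mem_descents.1 (hT hi)
      simpa [hi] using h2
    · exact (mem_filter.1 hi).2
    · have := (mem_Icc.1 (mem_filter.1 hi).1).1
      show i - 1 + 1 = i
      omega
  rw [hself, hshift, ← sum_add_distrib, ← sum_add_distrib]
  refine sum_congr rfl fun i hi => ?_
  obtain ⟨h1, h2⟩ := mem_Icc.1 hi
  rw [ext'_writePairs 1 0 T p h1 h2]
  by_cases hiT : i ∈ T
  · have h0 : i - 1 ∉ T := fun h =>
      succ_notMem_of_subset_descents hT h (by rwa [Nat.sub_add_cancel h1])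
    simp [hiT, h0, (mem_descents.1 (hT hiT)).2.2.1]
  · by_cases h0 : i - 1 ∈ T
    · have := (mem_descents.1 (hT h0)).2.2.2
      rw [Nat.sub_add_cancel h1] at this
      simp [hiT, h0, this]
    · simp [hiT, h0]

lemma lTerm_writePairs {N : ℕ → ℕ} (hmono : ∀ i, 1 ≤ i → i ≤ k → N (i + 1) ≤ N i)
    {T : Finset ℕ} {p : Fin k → Fin 2} (hT : T ⊆ descents k p) :
    lTerm k N (writePairs k 1 0 T p) = lTerm k N p * X ^ ∑ i ∈ T, (N i - N (i + 1)) := by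
  have hdiff : ∑ i ∈ T, (N i - N (i + 1)) + ∑ i ∈ T, N (i + 1) = ∑ i ∈ T, N i := by
    rw [← sum_add_distrib]
    refine sum_congr rfl fun i hi => Nat.sub_add_cancel ?_
    obtain ⟨h1, h2, -⟩ := mem_descents.1 (hT hi)
    exact hmono i h1 h2.le
  have hsum := sum_ext'_mul_writePairs N hT
  rw [lTerm, lTerm, ← pow_add]
  congr 1
  omega

lemma deltaR_eq_prod_descents (N : ℕ → ℕ) (p : Fin k → Fin 2) :
    deltaR k N p = ∏ i ∈ descents k p, (1 - X ^ (N i - N (i + 1))) := by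
  rw [deltaR, descents, prod_filter]
  exact prod_congr rfl fun i _ => by split_ifs <;> simp

lemma lTerm_mul_deltaR {N : ℕ → ℕ} (hmono : ∀ i, 1 ≤ i → i ≤ k → N (i + 1) ≤ N i)
    (p : Fin k → Fin 2) :
    lTerm k N p * deltaR k N p =
      ∑ T ∈ (descents k p).powerset, (-1 : ℤ) ^ #T • lTerm k N (writePairs k 1 0 T p) := by
  rw [deltaR_eq_prod_descents, prod_sub (fun _ => 1), mul_sum]
  refine sum_congr rfl fun T hT => ?_
  rw [lTerm_writePairs hmono (mem_powerset.1 hT), prod_const_one, prod_pow_eq_pow_sum,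
    zsmul_eq_mul]
  push_cast
  ring

def below (k : ℕ) (p : Fin k → Fin 2) : Finset (Fin k → Fin 2) :=
  univ.filter fun p' => onesCount k p' = onesCount k p ∧ tle k p' p

lemma mem_below {p q : Fin k → Fin 2} :
    q ∈ below k p ↔
      prefixSum k q k = prefixSum k p k ∧ ∀ j ≤ k, prefixSum k p j ≤ prefixSum k q j := by
  simp only [below, mem_filter, mem_univ, true_and, onesCount_eq_prefixSum, tle_iff]

lemma self_mem_below (p : Fin k → Fin 2) : p ∈ below k p :=
  mem_below.2 ⟨rfl, fun _ _ => le_rfl⟩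

def excessAscents (k : ℕ) (q p : Fin k → Fin 2) : Finset ℕ :=
  (ascents k q).filter fun i => prefixSum k p i < prefixSum k q i

lemma excessAscents_self (p : Fin k → Fin 2) : excessAscents k p p = ∅ :=
  filter_false_of_mem fun _ _ => lt_irrefl _

lemma writePairs_mem_below {p p' : Fin k → Fin 2} {T : Finset ℕ} (hp' : p' ∈ below k p)
    (hT : T ⊆ descents k p') : writePairs k 1 0 T p' ∈ below k p := by
  obtain ⟨hk, hle⟩ := mem_below.1 hp'
  have hkT : k ∉ T := fun h => (mem_descents.1 (hT h)).2.1.false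
  refine mem_below.2 ⟨?_, fun j hj => ?_⟩
  · rw [prefixSum_writePairs hT le_rfl, if_neg hkT, hk, add_zero]
  · rw [prefixSum_writePairs hT hj]
    exact le_add_right (hle j hj)

lemma subset_excessAscents_writePairs {p p' : Fin k → Fin 2} {T : Finset ℕ}
    (hp' : p' ∈ below k p) (hT : T ⊆ descents k p') :
    T ⊆ excessAscents k (writePairs k 1 0 T p') p := by
  intro i hi
  obtain ⟨-, hik, -⟩ := mem_descents.1 (hT hi)
  refine mem_filter.2 ⟨subset_ascents_writePairs hT hi, ?_⟩
  rw [prefixSum_writePairs hT hik.le, if_pos hi]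
  exact Nat.lt_succ_of_le ((mem_below.1 hp').2 i hik.le)

lemma writePairs_mem_below_of_subset_excessAscents {p q : Fin k → Fin 2} {T : Finset ℕ}
    (hq : q ∈ below k p) (hT : T ⊆ excessAscents k q p) : writePairs k 0 1 T q ∈ below k p := by
  have hTa : T ⊆ ascents k q := hT.trans (filter_subset _ _)
  obtain ⟨hk, hle⟩ := mem_below.1 hq
  have hkT : k ∉ T := fun h => (mem_ascents.1 (hTa h)).2.1.false
  refine mem_below.2 ⟨?_, fun j hj => ?_⟩
  · have hsum := prefixSum_writePairs_of_subset_ascents hTa le_rfl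
    rw [if_neg hkT] at hsum
    omega
  · have hsum := prefixSum_writePairs_of_subset_ascents hTa hj
    have hpq := hle j hj
    split_ifs at hsum with hjT
    · have hstrict := (mem_filter.1 (hT hjT)).2
      omega
    · omega

lemma sum_sigma_descents_eq_sum_sigma_excessAscents {M : Type*} [AddCommMonoid M]
    (p : Fin k → Fin 2) (F : (Fin k → Fin 2) → Finset ℕ → M) :
    ∑ x ∈ (below k p).sigma fun p' => (descents k p').powerset,
        F (writePairs k 1 0 x.2 x.1) x.2 =
      ∑ x ∈ (below k p).sigma fun q => (excessAscents k q p).powerset, F x.1 x.2 := by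
  refine sum_nbij' (fun x => ⟨writePairs k 1 0 x.2 x.1, x.2⟩)
    (fun x => ⟨writePairs k 0 1 x.2 x.1, x.2⟩) ?_ ?_ ?_ ?_ fun _ _ => rfl
  · rintro ⟨p', T⟩ hx
    simp only [mem_sigma, mem_powerset] at hx ⊢
    exact ⟨writePairs_mem_below hx.1 hx.2, subset_excessAscents_writePairs hx.1 hx.2⟩
  · rintro ⟨q, T⟩ hx
    simp only [mem_sigma, mem_powerset] at hx ⊢
    exact ⟨writePairs_mem_below_of_subset_excessAscents hx.1 hx.2,
      subset_descents_writePairs (hx.2.trans (filter_subset _ _))⟩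
  · rintro ⟨p', T⟩ hx
    simp only [mem_sigma, mem_powerset] at hx
    simp only [writePairs_writePairs_of_subset_descents hx.2]
  · rintro ⟨q, T⟩ hx
    simp only [mem_sigma, mem_powerset] at hx
    simp only [writePairs_writePairs_of_subset_ascents (hx.2.trans (filter_subset _ _))]

lemma exists_ext'_eq_one_of_prefixSum_lt {p q : Fin k → Fin 2}
    (h : ∃ j, prefixSum k p j < prefixSum k q j) :
    ∃ j, ext' k q j = 1 ∧ prefixSum k p j < prefixSum k q j := by
  refine ⟨Nat.find h, ?_, Nat.find_spec h⟩
  have hlt := Nat.find_spec h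
  obtain ⟨j, hj⟩ : ∃ j, Nat.find h = j + 1 := Nat.exists_eq_succ_of_ne_zero fun h0 => by
    rw [h0, prefixSum_zero, prefixSum_zero] at hlt
    exact lt_irrefl _ hlt
  have hmin := Nat.find_min h (show j < Nat.find h by omega)
  rw [hj, prefixSum_succ, prefixSum_succ] at hlt
  rw [hj]
  have := ext'_le_one q (j + 1)
  omega

lemma excessAscents_nonempty {p q : Fin k → Fin 2} (hq : q ∈ below k p) (hne : q ≠ p) :
    (excessAscents k q p).Nonempty := by
  obtain ⟨hk, hle⟩ := mem_below.1 hq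
  set F := (Icc 1 k).filter fun j => ext' k q j = 1 ∧ prefixSum k p j < prefixSum k q j
  have hF : F.Nonempty := by
    obtain ⟨j, hj1, hjlt⟩ := exists_ext'_eq_one_of_prefixSum_lt (p := p) (q := q) (by
      by_contra! h
      exact hne (eq_of_prefixSum_eq fun j hj => le_antisymm (h j) (hle j hj)))
    refine ⟨j, mem_filter.2 ⟨mem_Icc.2 ?_, hj1, hjlt⟩⟩
    by_contra hj
    rw [ext'_eq_zero q (by omega)] at hj1
    exact zero_ne_one hj1
  obtain ⟨j, hjF, hjmax⟩ : ∃ j ∈ F, ∀ i ∈ F, i ≤ j := ⟨F.max' hF, F.max'_mem hF, F.le_max'⟩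
  obtain ⟨hjIcc, hj1, hjlt⟩ := mem_filter.1 hjF
  have hjk : j < k := lt_of_le_of_ne (mem_Icc.1 hjIcc).2 (by rintro rfl; omega)
  refine ⟨j, mem_filter.2 ⟨mem_ascents.2 ⟨(mem_Icc.1 hjIcc).1, hjk, hj1, ?_⟩, hjlt⟩⟩
  by_contra hnext
  have hsucc : j + 1 ∈ F := by
    have := ext'_le_one q (j + 1)
    have := ext'_le_one p (j + 1)
    refine mem_filter.2 ⟨mem_Icc.2 ⟨by omega, hjk⟩, by omega, ?_⟩
    rw [prefixSum_succ, prefixSum_succ]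
    omega
  exact absurd (hjmax _ hsucc) (by omega)

end TelescopingIdentity

open TelescopingIdentity

theorem stmt2_general (k : ℕ) (N : ℕ → ℕ)
    (hmono : ∀ i, 1 ≤ i → i ≤ k → N (i + 1) ≤ N i)
    (p : Fin k → Fin 2) :
    lTerm k N p =
      ∑ p' ∈ Finset.univ.filter
          (fun p' : Fin k → Fin 2 => onesCount k p' = onesCount k p ∧ tle k p' p),
        lTerm k N p' * deltaR k N p' := by
  change _ = ∑ p' ∈ below k p, _
  simp_rw [lTerm_mul_deltaR hmono]
  rw [sum_sigma', sum_sigma_descents_eq_sum_sigma_excessAscents p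
    fun q T => (-1 : ℤ) ^ #T • lTerm k N q, sum_sigma]
  simp_rw [← sum_smul]
  rw [sum_eq_single_of_mem p (self_mem_below p)]
  · simp [excessAscents_self]
  · intro q hq hne
    rw [sum_powerset_neg_one_pow_card_of_nonempty (excessAscents_nonempty hq hne), zero_smul]

/-- Lemma 3.11 (telescoping identity): `l_p(q) = ∑_{p' ≤ p, same number of ones} l_{p'}(q) δ¹_{p'}(q)`. -/
theorem stmt2 (k : ℕ) (hk : 1 ≤ k) (N : ℕ → ℕ)
    (hmono : ∀ i, 1 ≤ i → i ≤ k → N (i + 1) ≤ N i)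
    (hzero : ∀ i, k < i → N i = 0)
    (p : Fin k → Fin 2) :
    lTerm k N p =
      ∑ p' ∈ Finset.univ.filter
          (fun p' : Fin k → Fin 2 => onesCount k p' = onesCount k p ∧ tle k p' p),
        lTerm k N p' * deltaR k N p' :=
  stmt2_general k N hmono p
end

section
/- Fix k ≥ 1, integers N_{2,k} ≥ ... ≥ N_{2,1} ≥ 0 with convention N_{2,0} = 0. For p ∈ {0,1}^k define l^2_p(q) = q^{∑_{i=1}^k p_i N_{2,i}} and δ^2_p(q) = ∏_{i=1}^k (1 - [p_i = 0 and p_{i-1} = 1] · q^{N_{2,i} - N_{2,i-1}}) (with p_0 := 0). Let ≥ be the partial order on binary k-tuples with the same number of ones given by p' ≥ p iff ∑_{i=1}^j p'_i ≤ ∑_{i=1}^j p_i for all j. Then for every p ∈ {0,1}^k: l^2_p(q) = ∑_{p' ≥ p, p' with the same number of ones as p} l^2_{p'}(q) · δ^2_{p'}(q). -/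
/-!
Induction on `k`, splitting off the last entry `c` of `p = (a, c)`. If `c = 1`, every `p' ≥ p`
also ends in `1`, and both sides pick up the factor `q^{N_{k+1}}`. If `c = 0`, the `p' = (r, 0)`
contribute `l_r δ_r (1 - [r_k = 1] q^{N_{k+1} - N_k})` with `r ≥ a`, and the `p' = (r, 1)`
contribute `q^{N_{k+1}} l_r δ_r` with `r` having one one fewer than `a` and partial sums bounded
by those of `a`. By induction the two
correction sums are `q^{N_{k+1} - N_k} l_{a''}` and `q^{N_{k+1}} l_{a'}`, where `a'` is `a` with its
last one deleted and `a''` is `a'` with a one put at position `k`; they cancel because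
`l_{a''} = q^{N_k} l_{a'}`.
-/

open Finset Polynomial

def psum (k : ℕ) (p : Fin k → Fin 2) (j : ℕ) : ℕ := ∑ i ∈ Icc 1 j, ext' k p i

def tleUpper (k : ℕ) (p : Fin k → Fin 2) : Finset (Fin k → Fin 2) :=
  univ.filter fun p' => onesCount k p' = onesCount k p ∧ tle k p p'

noncomputable def weight (k : ℕ) (N : ℕ → ℕ) (p : Fin k → Fin 2) : ℤ[X] :=
  lTerm k N p * deltaL k N p

section BinaryTuple

variable {k : ℕ}

lemma ext'_le_one (p : Fin k → Fin 2) (i : ℕ) : ext' k p i ≤ 1 := by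
  unfold ext'
  split
  · exact Nat.lt_succ_iff.mp (p _).isLt
  · exact zero_le_one

lemma ext'_zero (p : Fin k → Fin 2) : ext' k p 0 = 0 := by
  simp [ext']

lemma ext'_snoc (r : Fin k → Fin 2) (b : Fin 2) (i : ℕ) :
    ext' (k + 1) (Fin.snoc r b) i = if i = k + 1 then (b : ℕ) else ext' k r i := by
  unfold ext'
  split_ifs with hi hlast hr <;> try omega
  · subst hlast
    simp [Fin.snoc]
  · simp [Fin.snoc, show i - 1 < k by omega]

lemma ext'_snoc_self (r : Fin k → Fin 2) (b : Fin 2) :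
    ext' (k + 1) (Fin.snoc r b) (k + 1) = b := by
  simp [ext'_snoc]

lemma ext'_snoc_of_le (r : Fin k → Fin 2) (b : Fin 2) {i : ℕ} (hi : i ≤ k) :
    ext' (k + 1) (Fin.snoc r b) i = ext' k r i := by
  simp [ext'_snoc, show i ≠ k + 1 by omega]

lemma psum_zero (p : Fin k → Fin 2) : psum k p 0 = 0 := by
  simp [psum]

lemma psum_succ (p : Fin k → Fin 2) (j : ℕ) :
    psum k p (j + 1) = psum k p j + ext' k p (j + 1) :=
  sum_Icc_succ_top (by omega) _

lemma psum_mono (p : Fin k → Fin 2) : Monotone (psum k p) := fun _ _ h =>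
  sum_le_sum_of_subset (Icc_subset_Icc_right h)

lemma psum_snoc (r : Fin k → Fin 2) (b : Fin 2) {j : ℕ} (hj : j ≤ k) :
    psum (k + 1) (Fin.snoc r b) j = psum k r j :=
  sum_congr rfl fun _ hi => ext'_snoc_of_le r b ((mem_Icc.mp hi).2.trans hj)

lemma onesCount_eq_psum (p : Fin k → Fin 2) : onesCount k p = psum k p k := by
  induction k with
  | zero => simp [onesCount, psum]
  | succ k ih =>
    cases p using Fin.snocCases with
    | snoc r b =>
      rw [onesCount, Fin.sum_univ_castSucc, psum_succ, ext'_snoc_self]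
      simp only [Fin.snoc_castSucc, Fin.snoc_last]
      rw [← onesCount, ih, psum_snoc r b le_rfl]

lemma ext'_le_onesCount (r : Fin k → Fin 2) : ext' k r k ≤ onesCount k r := by
  cases k with
  | zero => simp [ext'_zero]
  | succ k => simp [onesCount_eq_psum, psum_succ]

lemma tle_iff_psum (p₁ p₂ : Fin k → Fin 2) :
    tle k p₁ p₂ ↔ ∀ j ≤ k, psum k p₂ j ≤ psum k p₁ j := by
  refine ⟨fun h j hj => ?_, fun h j hj => h j (mem_Icc.mp hj).2⟩
  rcases Nat.eq_zero_or_pos j with rfl | hj0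
  · simp [psum_zero]
  · exact h j (mem_Icc.mpr ⟨hj0, hj⟩)

lemma onesCount_le_of_tle {p₁ p₂ : Fin k → Fin 2} (h : tle k p₁ p₂) :
    onesCount k p₂ ≤ onesCount k p₁ := by
  simpa only [onesCount_eq_psum] using (tle_iff_psum p₁ p₂).mp h k le_rfl

lemma onesCount_snoc (r : Fin k → Fin 2) (b : Fin 2) :
    onesCount (k + 1) (Fin.snoc r b) = onesCount k r + b := by
  rw [onesCount_eq_psum, onesCount_eq_psum, psum_succ, psum_snoc r b le_rfl, ext'_snoc_self]

lemma tle_snoc (a r : Fin k → Fin 2) (c b : Fin 2) :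
    tle (k + 1) (Fin.snoc a c) (Fin.snoc r b) ↔
      tle k a r ∧ onesCount k r + b ≤ onesCount k a + c := by
  rw [tle_iff_psum, tle_iff_psum, ← onesCount_snoc, ← onesCount_snoc, onesCount_eq_psum,
    onesCount_eq_psum]
  constructor
  · intro h
    exact ⟨fun j hj => by simpa only [psum_snoc _ _ hj] using h j (by omega), h (k + 1) le_rfl⟩
  · rintro ⟨h, hk⟩ j hj
    obtain hj' | rfl := Nat.lt_or_eq_of_le hj
    · simpa only [psum_snoc _ _ (Nat.le_of_lt_succ hj')] using h j (by omega)
    · exact hk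

lemma snoc_mem_tleUpper_snoc (a r : Fin k → Fin 2) (c b : Fin 2) :
    Fin.snoc r b ∈ tleUpper (k + 1) (Fin.snoc a c) ↔
      onesCount k r + b = onesCount k a + c ∧ tle k a r := by
  simp only [tleUpper, mem_filter, mem_univ, true_and, onesCount_snoc, tle_snoc]
  constructor
  · rintro ⟨h, h', -⟩
    exact ⟨h, h'⟩
  · rintro ⟨h, h'⟩
    exact ⟨h, h', h.le⟩

end BinaryTuple

section Weights

variable {k : ℕ} (N : ℕ → ℕ)

lemma lTerm_snoc (r : Fin k → Fin 2) (b : Fin 2) :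
    lTerm (k + 1) N (Fin.snoc r b) = lTerm k N r * X ^ ((b : ℕ) * N (k + 1)) := by
  rw [lTerm, lTerm, ← pow_add, sum_Icc_succ_top (by omega), ext'_snoc_self]
  congr 2
  exact sum_congr rfl fun i hi => by rw [ext'_snoc_of_le r b (mem_Icc.mp hi).2]

lemma deltaL_snoc (r : Fin k → Fin 2) (b : Fin 2) :
    deltaL (k + 1) N (Fin.snoc r b) = deltaL k N r *
      (1 - if (b : ℕ) = 0 ∧ ext' k r k = 1 then X ^ (N (k + 1) - N k) else 0) := by
  rw [deltaL, deltaL, prod_Icc_succ_top (by omega), ext'_snoc_self, Nat.add_sub_cancel,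
    ext'_snoc_of_le r b le_rfl]
  congr 1
  refine prod_congr rfl fun i hi => ?_
  rw [ext'_snoc_of_le r b (mem_Icc.mp hi).2, ext'_snoc_of_le r b (by have := mem_Icc.mp hi; omega)]

lemma weight_snoc_one (r : Fin k → Fin 2) :
    weight (k + 1) N (Fin.snoc r 1) = X ^ N (k + 1) * weight k N r := by
  simp only [weight, lTerm_snoc, deltaL_snoc, Fin.val_one, one_mul, one_ne_zero, false_and,
    if_false, sub_zero, mul_one]
  ring

lemma weight_snoc_zero (r : Fin k → Fin 2) :
    weight (k + 1) N (Fin.snoc r 0) =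
      weight k N r - if ext' k r k = 1 then X ^ (N (k + 1) - N k) * weight k N r else 0 := by
  simp only [weight, lTerm_snoc, deltaL_snoc, Fin.val_zero, zero_mul, pow_zero, mul_one, true_and]
  split_ifs <;> ring

end Weights

lemma sum_tleUpper_snoc {M : Type*} [AddCommMonoid M] {k : ℕ}
    (f : (Fin (k + 1) → Fin 2) → M) (a : Fin k → Fin 2) (c : Fin 2) :
    ∑ q ∈ tleUpper (k + 1) (Fin.snoc a c), f q =
      ∑ r with onesCount k r = onesCount k a + c ∧ tle k a r, f (Fin.snoc r 0) +
      ∑ r with onesCount k r + 1 = onesCount k a + c ∧ tle k a r, f (Fin.snoc r 1) := by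
  rw [← Fintype.sum_ite_mem, ← (Fin.snocEquiv fun _ => Fin 2).sum_comp, Fintype.sum_prod_type,
    sum_comm, sum_filter, sum_filter, ← sum_add_distrib]
  refine sum_congr rfl fun r _ => ?_
  rw [Fin.sum_univ_two]
  change
    (if (Fin.snoc r 0 : Fin (k + 1) → Fin 2) ∈ tleUpper (k + 1) (Fin.snoc a c)
      then f (Fin.snoc r 0) else 0) +
    (if (Fin.snoc r 1 : Fin (k + 1) → Fin 2) ∈ tleUpper (k + 1) (Fin.snoc a c)
      then f (Fin.snoc r 1) else 0) = _
  simp only [snoc_mem_tleUpper_snoc, Fin.val_zero, Fin.val_one, Nat.add_zero]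

section Cases

variable {k : ℕ} (N : ℕ → ℕ)

lemma sum_weight_tleUpper_snoc_one (a : Fin k → Fin 2) :
    ∑ q ∈ tleUpper (k + 1) (Fin.snoc a 1), weight (k + 1) N q =
      X ^ N (k + 1) * ∑ r ∈ tleUpper k a, weight k N r := by
  have hempty : ∀ r, ¬(onesCount k r = onesCount k a + 1 ∧ tle k a r) := fun r ⟨h, h'⟩ =>
    absurd (onesCount_le_of_tle h') (by omega)
  rw [sum_tleUpper_snoc]
  simp only [Fin.val_one, add_left_inj, weight_snoc_one]
  rw [filter_false_of_mem fun r _ => hempty r, sum_empty, zero_add, mul_sum]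
  rfl

lemma sum_weight_tleUpper_snoc_zero (a : Fin k → Fin 2) :
    ∑ q ∈ tleUpper (k + 1) (Fin.snoc a 0), weight (k + 1) N q =
      ∑ r ∈ tleUpper k a, weight k N r
        - X ^ (N (k + 1) - N k) * ∑ r ∈ tleUpper k a with ext' k r k = 1, weight k N r
        + X ^ N (k + 1) *
          ∑ r with onesCount k r + 1 = onesCount k a ∧ tle k a r, weight k N r := by
  rw [sum_tleUpper_snoc, mul_sum, mul_sum, sum_filter (s := tleUpper k a), ← sum_sub_distrib]
  simp only [Fin.val_zero, add_zero, weight_snoc_zero, weight_snoc_one]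
  rfl

end Cases

section DropLastOne

variable {k : ℕ}

-- `b` is `a` with its last one turned into a zero.
lemma exists_psum_eq_min (a : Fin k → Fin 2) :
    ∃ b : Fin k → Fin 2, ∀ j ≤ k, psum k b j = min (psum k a j) (onesCount k a - 1) := by
  induction k with
  | zero => exact ⟨a, fun j hj => by simp [Nat.le_zero.mp hj, psum_zero]⟩
  | succ k ih =>
    cases a using Fin.snocCases with
    | snoc a c =>
      obtain ⟨b, hb⟩ := ih a
      have hc : (c : ℕ) ≤ 1 := Nat.lt_succ_iff.mp c.isLt
      have hak : psum k a k = onesCount k a := (onesCount_eq_psum a).symm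
      refine ⟨Fin.snoc (if (c : ℕ) = 1 then a else b) 0, fun j hj => ?_⟩
      obtain hj | rfl := Nat.lt_or_eq_of_le hj
      · have hja : psum k a j ≤ onesCount k a := hak ▸ psum_mono a (Nat.le_of_lt_succ hj)
        rw [psum_snoc _ _ (Nat.le_of_lt_succ hj), psum_snoc _ _ (Nat.le_of_lt_succ hj),
          onesCount_snoc]
        split_ifs with h
        · omega
        · rw [hb j (Nat.le_of_lt_succ hj)]
          omega
      · rw [psum_succ, psum_succ, psum_snoc _ _ le_rfl, psum_snoc _ _ le_rfl, ext'_snoc_self,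
          ext'_snoc_self, onesCount_snoc, hak]
        split_ifs with h
        · rw [← hak]
          simp only [Fin.val_zero]
          omega
        · rw [hb k le_rfl, hak]
          simp only [Fin.val_zero]
          omega

lemma exists_snoc_zero_psum_eq_min (a : Fin (k + 1) → Fin 2) :
    ∃ b : Fin k → Fin 2, ∀ j ≤ k + 1,
      psum (k + 1) (Fin.snoc b 0) j = min (psum (k + 1) a j) (onesCount (k + 1) a - 1) := by
  obtain ⟨b, hb⟩ := exists_psum_eq_min a
  cases b using Fin.snocCases with
  | snoc b c =>
    have hc : c = 0 := by
      have h₁ := hb (k + 1) le_rfl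
      have h₂ := hb k k.le_succ
      rw [psum_succ, psum_snoc _ _ le_rfl, ext'_snoc_self] at h₁
      rw [psum_snoc _ _ le_rfl] at h₂
      have := psum_succ a k
      have := ext'_le_one a (k + 1)
      rw [onesCount_eq_psum] at h₁ h₂
      exact Fin.ext (by simp only [Fin.val_zero]; omega)
    exact ⟨b, hc ▸ hb⟩

variable {a : Fin (k + 1) → Fin 2} {b : Fin k → Fin 2}

lemma filter_onesCount_succ_eq_tleUpper
    (hb : ∀ j ≤ k + 1,
      psum (k + 1) (Fin.snoc b 0) j = min (psum (k + 1) a j) (onesCount (k + 1) a - 1))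
    (ha : 1 ≤ onesCount (k + 1) a) :
    univ.filter (fun r => onesCount (k + 1) r + 1 = onesCount (k + 1) a ∧ tle (k + 1) a r) =
      tleUpper (k + 1) (Fin.snoc b 0) := by
  ext r
  simp only [tleUpper, mem_filter, mem_univ, true_and, tle_iff_psum]
  have hpt := hb (k + 1) le_rfl
  rw [← onesCount_eq_psum, ← onesCount_eq_psum] at hpt
  have hr : ∀ j ≤ k + 1, psum (k + 1) r j ≤ onesCount (k + 1) r := fun j hj =>
    onesCount_eq_psum r ▸ psum_mono r hj
  constructor
  · rintro ⟨hcount, hle⟩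
    refine ⟨by omega, fun j hj => ?_⟩
    rw [hb j hj]
    exact le_min (hle j hj) (by have := hr j hj; omega)
  · rintro ⟨hcount, hle⟩
    refine ⟨by omega, fun j hj => ?_⟩
    have := hb j hj
    have := hle j hj
    omega

lemma filter_tleUpper_ext'_eq_one
    (hb : ∀ j ≤ k + 1,
      psum (k + 1) (Fin.snoc b 0) j = min (psum (k + 1) a j) (onesCount (k + 1) a - 1))
    (ha : 1 ≤ onesCount (k + 1) a) :
    (tleUpper (k + 1) a).filter (fun r => ext' (k + 1) r (k + 1) = 1) =
      tleUpper (k + 1) (Fin.snoc b 1) := by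
  ext r
  simp only [tleUpper, mem_filter, mem_univ, true_and, tle_iff_psum]
  have hpt := hb (k + 1) le_rfl
  rw [← onesCount_eq_psum, ← onesCount_eq_psum] at hpt
  have hpu : ∀ j ≤ k, psum (k + 1) (Fin.snoc b 1) j = psum (k + 1) (Fin.snoc b 0) j :=
    fun j hj => by rw [psum_snoc _ _ hj, psum_snoc _ _ hj]
  have hcount : onesCount (k + 1) (Fin.snoc b 1) = onesCount (k + 1) a := by
    have h₀ := onesCount_snoc b 0
    have h₁ := onesCount_snoc b 1
    simp only [Fin.val_zero, Fin.val_one] at h₀ h₁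
    omega
  have hr : ∀ j ≤ k, psum (k + 1) r j ≤ psum (k + 1) r k := fun j hj => psum_mono r hj
  have hrk : onesCount (k + 1) r = psum (k + 1) r k + ext' (k + 1) r (k + 1) := by
    rw [onesCount_eq_psum, psum_succ]
  have := ext'_le_one r (k + 1)
  constructor
  · rintro ⟨⟨hrcount, hle⟩, hr1⟩
    refine ⟨by omega, fun j hj => ?_⟩
    obtain hjk | rfl := Nat.lt_or_eq_of_le hj
    · rw [hpu j (Nat.le_of_lt_succ hjk), hb j hj]
      exact le_min (hle j hj) (by have := hr j (Nat.le_of_lt_succ hjk); omega)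
    · rw [← onesCount_eq_psum, ← onesCount_eq_psum]
      omega
  · rintro ⟨hrcount, hle⟩
    have hbk := hb k k.le_succ
    have hrk' := hle k k.le_succ
    rw [hpu k le_rfl] at hrk'
    refine ⟨⟨by omega, fun j hj => ?_⟩, by omega⟩
    obtain hjk | rfl := Nat.lt_or_eq_of_le hj
    · have := hle j hj
      rw [hpu j (Nat.le_of_lt_succ hjk), hb j hj] at this
      omega
    · rw [← onesCount_eq_psum, ← onesCount_eq_psum]
      omega

end DropLastOne

section Induction

variable {k : ℕ} (N : ℕ → ℕ)

lemma sum_weight_tleUpper_filter_ext'_eq_one_of_onesCount_eq_zero {a : Fin k → Fin 2}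
    (ha : onesCount k a = 0) :
    ∑ r ∈ tleUpper k a with ext' k r k = 1, weight k N r = 0 :=
  sum_eq_zero fun r hr => by
    simp only [tleUpper, mem_filter, mem_univ, true_and] at hr
    have := ext'_le_onesCount r
    omega

lemma sum_weight_onesCount_succ_of_onesCount_eq_zero {a : Fin k → Fin 2}
    (ha : onesCount k a = 0) :
    ∑ r with onesCount k r + 1 = onesCount k a ∧ tle k a r, weight k N r = 0 :=
  sum_eq_zero fun r hr => by
    simp only [mem_filter, mem_univ, true_and] at hr
    omega

lemma sum_weight_tleUpper_filter_ext'_eq_one (hN : N (k + 1) ≤ N (k + 2))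
    (ih : ∀ a : Fin (k + 1) → Fin 2,
      lTerm (k + 1) N a = ∑ r ∈ tleUpper (k + 1) a, weight (k + 1) N r)
    {a : Fin (k + 1) → Fin 2} (ha : 1 ≤ onesCount (k + 1) a) :
    X ^ (N (k + 2) - N (k + 1)) *
        ∑ r ∈ tleUpper (k + 1) a with ext' (k + 1) r (k + 1) = 1, weight (k + 1) N r =
      X ^ N (k + 2) *
        ∑ r with onesCount (k + 1) r + 1 = onesCount (k + 1) a ∧ tle (k + 1) a r,
          weight (k + 1) N r := by
  obtain ⟨b, hb⟩ := exists_snoc_zero_psum_eq_min a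
  rw [filter_tleUpper_ext'_eq_one hb ha, filter_onesCount_succ_eq_tleUpper hb ha, ← ih, ← ih,
    lTerm_snoc, lTerm_snoc, Fin.val_one, Fin.val_zero, one_mul, zero_mul, pow_zero, mul_one,
    mul_left_comm, ← pow_add, Nat.sub_add_cancel hN, mul_comm]

lemma lTerm_snoc_zero_eq_sum_weight (hmono : ∀ i, 1 ≤ i → i < k + 1 → N i ≤ N (i + 1))
    (ih : ∀ a : Fin k → Fin 2, lTerm k N a = ∑ r ∈ tleUpper k a, weight k N r)
    (a : Fin k → Fin 2) :
    lTerm (k + 1) N (Fin.snoc a 0) =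
      ∑ q ∈ tleUpper (k + 1) (Fin.snoc a 0), weight (k + 1) N q := by
  suffices X ^ (N (k + 1) - N k) * ∑ r ∈ tleUpper k a with ext' k r k = 1, weight k N r =
      X ^ N (k + 1) * ∑ r with onesCount k r + 1 = onesCount k a ∧ tle k a r, weight k N r by
    rw [sum_weight_tleUpper_snoc_zero, this, sub_add_cancel, ← ih, lTerm_snoc, Fin.val_zero,
      zero_mul, pow_zero, mul_one]
  rcases Nat.eq_zero_or_pos (onesCount k a) with ha | ha
  · rw [sum_weight_tleUpper_filter_ext'_eq_one_of_onesCount_eq_zero N ha,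
      sum_weight_onesCount_succ_of_onesCount_eq_zero N ha, mul_zero, mul_zero]
  · cases k with
    | zero => simp [onesCount] at ha
    | succ k => exact sum_weight_tleUpper_filter_ext'_eq_one N (hmono _ (by omega) (by omega)) ih ha

lemma lTerm_snoc_one_eq_sum_weight
    (ih : ∀ a : Fin k → Fin 2, lTerm k N a = ∑ r ∈ tleUpper k a, weight k N r)
    (a : Fin k → Fin 2) :
    lTerm (k + 1) N (Fin.snoc a 1) =
      ∑ q ∈ tleUpper (k + 1) (Fin.snoc a 1), weight (k + 1) N q := by
  rw [sum_weight_tleUpper_snoc_one, ← ih, lTerm_snoc, Fin.val_one, one_mul, mul_comm]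

end Induction

open Matrix

theorem stmt3_general (k : ℕ) (N : ℕ → ℕ)
    (hmono : ∀ i, 1 ≤ i → i < k → N i ≤ N (i + 1))
    (p : Fin k → Fin 2) :
    lTerm k N p =
      ∑ p' ∈ Finset.univ.filter
          (fun p' : Fin k → Fin 2 => onesCount k p' = onesCount k p ∧ tle k p p'),
        lTerm k N p' * deltaL k N p' := by
  induction k with
  | zero => simp [lTerm, deltaL, onesCount, tle]
  | succ k ih =>
    have ih' := ih fun i h₁ h₂ => hmono i h₁ (by omega)
    cases p using Fin.snocCases with
    | snoc a c =>
      fin_cases c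
      · exact lTerm_snoc_zero_eq_sum_weight N hmono ih' a
      · exact lTerm_snoc_one_eq_sum_weight N ih' a

/-- Mirror version of the telescoping identity, with left-neighbour difference
factors and the partial order reversed. -/
theorem stmt3 (k : ℕ) (hk : 1 ≤ k) (N : ℕ → ℕ)
    (hmono : ∀ i, 1 ≤ i → i < k → N i ≤ N (i + 1))
    (hzero : N 0 = 0)
    (p : Fin k → Fin 2) :
    lTerm k N p =
      ∑ p' ∈ Finset.univ.filter
          (fun p' : Fin k → Fin 2 => onesCount k p' = onesCount k p ∧ tle k p p'),
        lTerm k N p' * deltaL k N p' :=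
  stmt3_general k N hmono p
end

section
/- Fix k ≥ 1 and integers i, j ≥ 0 with i + j ≤ k. Let p'' ∈ {0,1}^k have exactly i+j ones and p' ∈ {0,1}^k have exactly j ones. Define the partial order p1 ≤ p2 iff ∑_{m=1}^n p_{1,m} ≥ ∑_{m=1}^n p_{2,m} for all n = 1,...,k. Let g_i^1(p'') be obtained by changing the last i ones of p'' to zeros, and g_i^0(p') by changing the last i zeros of p' to ones. Then p' ≥ g_i^1(p'') if and only if p'' ≤ g_i^0(p'). -/
open Finset Polynomial

open Matrix

/-! Both sides are equivalent to `p'' ≤ p'`, i.e. to every prefix of `p'` having at most as many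
ones as the same prefix of `p''`. Deleting the last `i` ones of `p''` caps its prefix counts at
`j`, a cap the prefix counts of `p'` never exceed. Dually, `g_i^0` is `g_i^1` conjugated by the
complement, which reverses the order and swaps ones with zeros: then the last `i` zeros of `p'`
cap its prefix zero counts at `k - i - j`, which those of `p''` never exceed. -/

section PrefixOnes

variable {k : ℕ}

lemma fin_two_eq_zero_or_one (x : Fin 2) : x = 0 ∨ x = 1 := by decide +revert

def prefixOnes (k : ℕ) (p : Fin k → Fin 2) (t : ℕ) : ℕ :=
  ∑ n : Fin k with n.val < t, (p n : ℕ)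

lemma prefixOnes_zero (p : Fin k → Fin 2) : prefixOnes k p 0 = 0 := by
  simp [prefixOnes]

lemma prefixOnes_succ (p : Fin k → Fin 2) {t : ℕ} (ht : t < k) :
    prefixOnes k p (t + 1) = prefixOnes k p t + (p ⟨t, ht⟩ : ℕ) := by
  have hsplit : univ.filter (fun n : Fin k => n.val < t + 1)
      = insert ⟨t, ht⟩ (univ.filter fun n : Fin k => n.val < t) := by
    ext n; simp [Fin.ext_iff]; omega
  rw [prefixOnes, hsplit, sum_insert (by simp), add_comm, prefixOnes]

lemma prefixOnes_mono (p : Fin k → Fin 2) : Monotone (prefixOnes k p) :=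
  fun _ _ hst => sum_le_sum_of_subset (monotone_filter_right _ fun _ _ hn => by omega)

lemma prefixOnes_self (p : Fin k → Fin 2) : prefixOnes k p k = onesCount k p := by
  rw [prefixOnes, onesCount, filter_true_of_mem fun n _ => n.isLt]

lemma sum_Icc_ext'_eq_prefixOnes (p : Fin k → Fin 2) {t : ℕ} (ht : t ≤ k) :
    ∑ m ∈ Icc 1 t, ext' k p m = prefixOnes k p t := by
  induction t with
  | zero => simp [prefixOnes_zero]
  | succ t ih =>
    rw [sum_Icc_succ_top (by omega), ih (by omega), prefixOnes_succ p ht, ext',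
      dif_pos ⟨by omega, ht⟩]
    rfl

lemma tle_iff_prefixOnes {p q : Fin k → Fin 2} :
    tle k p q ↔ ∀ t ≤ k, prefixOnes k q t ≤ prefixOnes k p t := by
  refine ⟨fun h t ht => ?_, fun h t ht => ?_⟩
  · rcases Nat.eq_zero_or_pos t with rfl | ht0
    · simp [prefixOnes_zero]
    · simpa [sum_Icc_ext'_eq_prefixOnes _ ht] using h t (mem_Icc.2 ⟨ht0, ht⟩)
  · have ht := (mem_Icc.1 ht).2
    simpa [sum_Icc_ext'_eq_prefixOnes _ ht] using h t ht

lemma compl'_compl' (p : Fin k → Fin 2) : compl' k (compl' k p) = p := by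
  funext m; simp [compl']

lemma prefixOnes_compl'_add (p : Fin k → Fin 2) {t : ℕ} (ht : t ≤ k) :
    prefixOnes k (compl' k p) t + prefixOnes k p t = t := by
  induction t with
  | zero => simp [prefixOnes_zero]
  | succ t ih =>
    rw [prefixOnes_succ _ ht, prefixOnes_succ _ ht, compl']
    have := ih (by omega)
    have : ((1 - p ⟨t, ht⟩ : Fin 2) : ℕ) + (p ⟨t, ht⟩ : ℕ) = 1 := by
      generalize p ⟨t, ht⟩ = x; revert x; decide
    omega

lemma onesCount_compl' (p : Fin k → Fin 2) : onesCount k (compl' k p) = k - onesCount k p := by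
  have := prefixOnes_compl'_add p le_rfl
  rw [prefixOnes_self, prefixOnes_self] at this
  omega

lemma tle_compl'_iff {p q : Fin k → Fin 2} : tle k (compl' k q) (compl' k p) ↔ tle k p q := by
  simp only [tle_iff_prefixOnes]
  refine forall₂_congr fun t ht => ?_
  have := prefixOnes_compl'_add p ht
  have := prefixOnes_compl'_add q ht
  omega

lemma prefixOnes_add_card_onesFrom (p : Fin k → Fin 2) (m : Fin k) :
    prefixOnes k p m + #{n | m ≤ n ∧ p n = 1} = onesCount k p := by
  have hones : #{n | m ≤ n ∧ p n = 1} = ∑ n : Fin k with ¬ n.val < m.val, (p n : ℕ) := by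
    rw [sum_filter, card_filter]
    refine sum_congr rfl fun n _ => ?_
    rcases fin_two_eq_zero_or_one (p n) with h | h <;> simp [h]
  rw [hones, prefixOnes, onesCount, sum_filter_add_sum_filter_not]

lemma prefixOnes_g1 (i : ℕ) (p : Fin k → Fin 2) {t : ℕ} (ht : t ≤ k) :
    prefixOnes k (g1 k i p) t = min (prefixOnes k p t) (onesCount k p - i) := by
  induction t with
  | zero => simp [prefixOnes_zero]
  | succ t ih =>
    rw [prefixOnes_succ _ ht, prefixOnes_succ _ ht, ih (by omega)]
    have hsplit : prefixOnes k p t + #{n | ⟨t, ht⟩ ≤ n ∧ p n = 1} = onesCount k p :=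
      prefixOnes_add_card_onesFrom p ⟨t, ht⟩
    simp only [g1]
    split_ifs with hflip
    · have : (p ⟨t, ht⟩ : ℕ) = 1 := by rw [hflip.1]; rfl
      simp only [Fin.isValue, Fin.val_zero]
      omega
    · rcases fin_two_eq_zero_or_one (p ⟨t, ht⟩) with h | h
      · simp [h]
      · have : i < #{n | ⟨t, ht⟩ ≤ n ∧ p n = 1} := by
          by_contra! hle; exact hflip ⟨h, hle⟩
        simp only [h, Fin.isValue, Fin.val_one]
        omega

lemma g0_eq_compl'_g1_compl' (i : ℕ) (p : Fin k → Fin 2) :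
    g0 k i p = compl' k (g1 k i (compl' k p)) := by
  have hzero : ∀ x : Fin 2, 1 - x = 1 ↔ x = 0 := by decide
  funext m
  simp only [g0, g1, compl', hzero]
  split_ifs <;> simp

lemma tle_g1_iff {i : ℕ} {p q : Fin k → Fin 2} (h : onesCount k q ≤ onesCount k p - i) :
    tle k (g1 k i p) q ↔ tle k p q := by
  simp only [tle_iff_prefixOnes]
  refine forall₂_congr fun t ht => ?_
  have : prefixOnes k q t ≤ onesCount k q := prefixOnes_self q ▸ prefixOnes_mono q ht
  rw [prefixOnes_g1 i p ht]
  omega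

lemma tle_g0_iff {i : ℕ} {p q : Fin k → Fin 2}
    (h : k - onesCount k p ≤ k - onesCount k q - i) :
    tle k p (g0 k i q) ↔ tle k p q := by
  rw [g0_eq_compl'_g1_compl', ← tle_compl'_iff, compl'_compl',
    tle_g1_iff (by rwa [onesCount_compl', onesCount_compl']), tle_compl'_iff]

end PrefixOnes

theorem stmt5_general (k i j : ℕ)
    (p'' p' : Fin k → Fin 2)
    (h1 : onesCount k p'' = i + j) (h2 : onesCount k p' = j) :
    tle k (g1 k i p'') p' ↔ tle k p'' (g0 k i p') :=
  (tle_g1_iff (by omega)).trans (tle_g0_iff (by omega)).symm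

/-- `p' ≥ g_i^1(p'')` iff `p'' ≤ g_i^0(p')`, for `p''` with `i+j` ones and `p'` with `j` ones. -/
theorem stmt5 (k i j : ℕ) (hk : 1 ≤ k) (hij : i + j ≤ k)
    (p'' p' : Fin k → Fin 2)
    (h1 : onesCount k p'' = i + j) (h2 : onesCount k p' = j) :
    tle k (g1 k i p'') p' ↔ tle k p'' (g0 k i p') :=
  stmt5_general k i j p'' p' h1 h2
end

section
/- Let p'' and p' be binary k-tuples with p'' having exactly k_0 ones and p' having exactly k_0 + k_2 ones (k_0 + k_2 ≤ k). Let f_{k_2}^1(p') be obtained from p' by changing its first k_2 ones (at smallest positions) into zeros, and f_{k_2}^0(p'') by changing the first k_2 zeros of p'' into ones. Under the partial order p1 ≤ p2 iff all initial partial sums of p1 are ≥ those of p2: p'' ≤ f_{k_2}^1(p') if and only if p' ≥ f_{k_2}^0(p''). -/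
/-!
Write `S_p(j)` for the number of ones among the first `j` coordinates of `p`. Induction on `j`
gives `S_{f¹_i(p)}(j) = S_p(j) - min(S_p(j), i)`, and since `f⁰_i` is `f¹_i` conjugated by
complementation, `S_{f⁰_i(p)}(j) = S_p(j) + min(j - S_p(j), i)`. For each `j`, both sides of the
equivalence then say `S_{p'}(j) ≤ S_{p''}(j) + k₂` (both hold outright when
`j - S_{p''}(j) ≤ k₂`, as `S_{p'}(j) ≤ j`).
-/

open Finset Polynomial

open Matrix

def onesBelow {k : ℕ} (p : Fin k → Fin 2) (j : ℕ) : ℕ :=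
  ∑ n : Fin k with n.val < j, (p n : ℕ)

lemma onesBelow_zero {k : ℕ} (p : Fin k → Fin 2) : onesBelow p 0 = 0 := by
  simp [onesBelow]

lemma onesBelow_succ {k j : ℕ} (p : Fin k → Fin 2) (hj : j < k) :
    onesBelow p (j + 1) = onesBelow p j + p ⟨j, hj⟩ := by
  have hset : univ.filter (fun n : Fin k => n.val < j + 1)
      = insert ⟨j, hj⟩ (univ.filter fun n : Fin k => n.val < j) := by
    ext n
    simp only [mem_filter, mem_univ, true_and, mem_insert, Fin.ext_iff]
    omega
  rw [onesBelow, hset, sum_insert (by simp), add_comm, onesBelow]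

lemma sum_Icc_ext'_eq_onesBelow {k j : ℕ} (p : Fin k → Fin 2) (hj : j ≤ k) :
    ∑ i ∈ Icc 1 j, ext' k p i = onesBelow p j := by
  induction j with
  | zero => simp [onesBelow_zero]
  | succ j ih =>
    rw [sum_Icc_succ_top (by omega), ih (by omega), onesBelow_succ p hj, ext', dif_pos (by omega)]
    rfl

lemma tle_iff_onesBelow {k : ℕ} (p q : Fin k → Fin 2) :
    tle k p q ↔ ∀ j ≤ k, onesBelow q j ≤ onesBelow p j := by
  constructor
  · intro h j hj
    rcases Nat.eq_zero_or_pos j with rfl | hpos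
    · simp [onesBelow_zero]
    · simpa only [sum_Icc_ext'_eq_onesBelow _ hj] using h j (mem_Icc.2 ⟨hpos, hj⟩)
  · intro h j hj
    rw [sum_Icc_ext'_eq_onesBelow _ (mem_Icc.1 hj).2, sum_Icc_ext'_eq_onesBelow _ (mem_Icc.1 hj).2]
    exact h j (mem_Icc.1 hj).2

lemma onesBelow_add_onesBelow_compl {k j : ℕ} (p : Fin k → Fin 2) (hj : j ≤ k) :
    onesBelow p j + onesBelow (compl' k p) j = j := by
  induction j with
  | zero => simp [onesBelow_zero]
  | succ j ih =>
    have hx : ∀ x : Fin 2, (x : ℕ) + ((1 - x : Fin 2) : ℕ) = 1 := by decide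
    have := hx (p ⟨j, hj⟩)
    have := ih (by omega)
    rw [onesBelow_succ p hj, onesBelow_succ _ hj, compl']
    omega

lemma card_filter_le_and_eq_one {k : ℕ} (p : Fin k → Fin 2) (m : Fin k) :
    (univ.filter fun n => n ≤ m ∧ p n = 1).card = onesBelow p (m + 1) := by
  rw [card_filter, onesBelow, sum_filter]
  refine sum_congr rfl fun n _ => ?_
  have hle : n ≤ m ↔ n.val < m.val + 1 := Fin.le_def.trans Nat.lt_succ_iff.symm
  simp only [hle, ite_and]
  generalize p n = x
  fin_cases x <;> simp

lemma onesBelow_f1 {k j : ℕ} (i : ℕ) (p : Fin k → Fin 2) (hj : j ≤ k) :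
    onesBelow (f1 k i p) j = onesBelow p j - min (onesBelow p j) i := by
  induction j with
  | zero => simp [onesBelow_zero]
  | succ j ih =>
    rw [onesBelow_succ _ hj, onesBelow_succ p hj, ih (by omega), f1,
      card_filter_le_and_eq_one, onesBelow_succ p hj]
    obtain hx | hx : p ⟨j, hj⟩ = 0 ∨ p ⟨j, hj⟩ = 1 := by omega
    · simp [hx]
    · simp only [hx, true_and, Fin.val_one]
      split_ifs <;> simp only [Fin.val_zero, Fin.val_one] <;> omega

lemma f0_eq_compl'_f1_compl' (k i : ℕ) (p : Fin k → Fin 2) :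
    f0 k i p = compl' k (f1 k i (compl' k p)) := by
  have h : ∀ x : Fin 2, 1 - x = 1 ↔ x = 0 := by decide
  funext m
  simp only [f0, f1, compl', h]
  split_ifs <;> simp

lemma onesBelow_f0 {k j : ℕ} (i : ℕ) (p : Fin k → Fin 2) (hj : j ≤ k) :
    onesBelow (f0 k i p) j = onesBelow p j + min (j - onesBelow p j) i := by
  have hp := onesBelow_add_onesBelow_compl p hj
  have hf := onesBelow_add_onesBelow_compl (f1 k i (compl' k p)) hj
  rw [onesBelow_f1 i _ hj] at hf
  rw [f0_eq_compl'_f1_compl']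
  omega

theorem stmt8_general (k k2 : ℕ) (p'' p' : Fin k → Fin 2) :
    tle k p'' (f1 k k2 p') ↔ tle k (f0 k k2 p'') p' := by
  rw [tle_iff_onesBelow, tle_iff_onesBelow]
  refine forall₂_congr fun j hj => ?_
  rw [onesBelow_f1 k2 p' hj, onesBelow_f0 k2 p'' hj]
  have h'' := onesBelow_add_onesBelow_compl p'' hj
  have h' := onesBelow_add_onesBelow_compl p' hj
  omega

/-- `p'' ≤ f_{k₂}^1(p')` iff `p' ≥ f_{k₂}^0(p'')`, for `p''` with `k₀` ones and
`p'` with `k₀ + k₂` ones. -/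
theorem stmt8 (k k0 k2 : ℕ) (h : k0 + k2 ≤ k) (p'' p' : Fin k → Fin 2)
    (h1 : onesCount k p'' = k0) (h2 : onesCount k p' = k0 + k2) :
    tle k p'' (f1 k k2 p') ↔ tle k (f0 k k2 p'') p' :=
  stmt8_general k k2 p'' p'
end

section
/- Fix k ≥ 1 and nonincreasing integers N_{1,1} ≥ ... ≥ N_{1,k} ≥ 0 with N_{1,k+1} := 0. For binary k-tuples define l^1_p(q) = q^{∑ p_i N_{1,i}} and δ^1_p(q) = ∏_{i=1}^k (1 - [p_i=0, p_{i+1}=1] q^{N_{1,i}-N_{1,i+1}}) with p_{k+1} := 0. Let p' ∈ {0,1}^k have exactly s+1 ones with p'_k = 1, and let p be obtained from p' by setting the last coordinate to 0. Let the equivalence class of p' consist of all p'' with s+1 ones such that pos_{1,i}(p'') = pos_{1,i}(p') for i = 1,...,s. Then ∑_{p'' in the class of p'} l^1_{p''}(q) δ^1_{p''}(q) = l^1_p(q) δ^1_p(q) · q^{N_{1,k}}. -/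
/-!
Let `t` be the position of the `s`-th one of `p'`. The tuples in the class of `p'` are exactly
the truncation of `p'` after position `t` with one extra one placed at some position
`j ∈ (t, k]`; since `p'` has no ones strictly between `t` and `k`, that truncation is `p`.
Adding the one at `j` multiplies `l¹` by `q^{N_j}` and, for `j > t + 1`, multiplies `δ¹` by
`1 - q^{N_{j-1} - N_j}`, so the sum over `j` telescopes to `l¹_p δ¹_p q^{N_k}`.
-/

open Finset Polynomial

section Positions

variable {k : ℕ}

lemma le_of_ext'_eq_one {p : Fin k → Fin 2} {m : ℕ} (h : ext' k p m = 1) :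
    1 ≤ m ∧ m ≤ k := by
  unfold ext' at h
  split at h
  · assumption
  · simp at h

lemma ext'_succ (p : Fin k → Fin 2) (m : Fin k) : ext' k p ((m : ℕ) + 1) = (p m : ℕ) := by
  simp [ext']

lemma eq_of_ext'_eq {p q : Fin k → Fin 2} (h : ∀ i, ext' k p i = ext' k q i) : p = q := by
  funext m
  exact Fin.val_injective (by rw [← ext'_succ, ← ext'_succ, h])

def onesUpTo (k : ℕ) (p : Fin k → Fin 2) (n : ℕ) : ℕ := ∑ i ∈ Icc 1 n, ext' k p i

lemma onesUpTo_zero (p : Fin k → Fin 2) : onesUpTo k p 0 = 0 := by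
  simp [onesUpTo]

lemma onesUpTo_succ (p : Fin k → Fin 2) (n : ℕ) :
    onesUpTo k p (n + 1) = onesUpTo k p n + ext' k p (n + 1) :=
  sum_Icc_succ_top (by omega) _

lemma onesUpTo_mono (p : Fin k → Fin 2) : Monotone (onesUpTo k p) :=
  fun _ _ h => sum_le_sum_of_subset (Icc_subset_Icc_right h)

lemma onesUpTo_lt {p : Fin k → Fin 2} {m n : ℕ} (hmn : m < n) (hn : ext' k p n = 1) :
    onesUpTo k p m < onesUpTo k p n := by
  obtain ⟨n, rfl⟩ : ∃ n', n = n' + 1 := ⟨n - 1, by have := le_of_ext'_eq_one hn; omega⟩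
  have := onesUpTo_mono p (Nat.le_of_lt_succ hmn)
  rw [onesUpTo_succ]
  omega

lemma le_of_onesUpTo_le {p : Fin k → Fin 2} {m n : ℕ} (hm : ext' k p m = 1)
    (h : onesUpTo k p m ≤ onesUpTo k p n) : m ≤ n := by
  by_contra! hnm
  exact (onesUpTo_lt hnm hm).not_ge h

lemma onesUpTo_self (p : Fin k → Fin 2) : onesUpTo k p k = onesCount k p := by
  have h := sum_Ico_add' (fun i => ext' k p i) 0 k 1
  rw [← range_eq_Ico, ← Fin.sum_univ_eq_sum_range (fun i => ext' k p (i + 1)), zero_add,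
    Ico_add_one_right_eq_Icc] at h
  simp only [ext'_succ] at h
  exact h.symm

lemma onesUpTo_le_onesCount {p : Fin k → Fin 2} {n : ℕ} (hn : n ≤ k) :
    onesUpTo k p n ≤ onesCount k p :=
  onesUpTo_self p ▸ onesUpTo_mono p hn

lemma exists_onesUpTo_eq (p : Fin k → Fin 2) {i : ℕ} (hi : 1 ≤ i) :
    ∀ n, i ≤ onesUpTo k p n → ∃ m ≤ n, ext' k p m = 1 ∧ onesUpTo k p m = i
  | 0, h => by rw [onesUpTo_zero] at h; omega
  | n + 1, h => by
    by_cases hn : i ≤ onesUpTo k p n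
    · obtain ⟨m, hm, hm'⟩ := exists_onesUpTo_eq p hi n hn
      exact ⟨m, by omega, hm'⟩
    · have := ext'_le_one p (n + 1)
      rw [onesUpTo_succ] at h
      exact ⟨n + 1, le_rfl, by omega, by rw [onesUpTo_succ]; omega⟩

lemma pos1_eq_of_onesUpTo_eq {p : Fin k → Fin 2} {i m : ℕ} (hm : ext' k p m = 1)
    (hi : onesUpTo k p m = i) : pos1 k i p = m := by
  have : {m' | ext' k p m' = 1 ∧ onesUpTo k p m' = i} = {m} := by
    ext m'
    refine ⟨fun ⟨hm', hi'⟩ => ?_, fun h => h ▸ ⟨hm, hi⟩⟩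
    exact le_antisymm (le_of_onesUpTo_le hm' (by omega)) (le_of_onesUpTo_le hm (by omega))
  exact (congrArg sInf this).trans (csInf_singleton m)

lemma pos1_zero (p : Fin k → Fin 2) : pos1 k 0 p = 0 := by
  have : {m | ext' k p m = 1 ∧ onesUpTo k p m = 0} = ∅ :=
    Set.eq_empty_of_forall_notMem fun m ⟨hm, h0⟩ =>
      (onesUpTo_lt (le_of_ext'_eq_one hm).1 hm).ne' (by rw [h0, onesUpTo_zero])
  exact (congrArg sInf this).trans Nat.sInf_empty

lemma ext'_pos1 {p : Fin k → Fin 2} {i : ℕ} (hi : 1 ≤ i) (hi' : i ≤ onesCount k p) :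
    ext' k p (pos1 k i p) = 1 ∧ onesUpTo k p (pos1 k i p) = i := by
  obtain ⟨m, -, hm, hmi⟩ := exists_onesUpTo_eq p hi k (by rwa [onesUpTo_self])
  rw [pos1_eq_of_onesUpTo_eq hm hmi]
  exact ⟨hm, hmi⟩

lemma onesUpTo_pos1 {p : Fin k → Fin 2} {s : ℕ} (hs : s ≤ onesCount k p) :
    onesUpTo k p (pos1 k s p) = s := by
  rcases Nat.eq_zero_or_pos s with rfl | hs0
  · rw [pos1_zero, onesUpTo_zero]
  · exact (ext'_pos1 hs0 hs).2

lemma pos1_lt {s : ℕ} {p : Fin k → Fin 2} (hs : s < onesCount k p) : pos1 k s p < k := by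
  by_contra! hk
  have := onesUpTo_mono p hk
  rw [onesUpTo_self, onesUpTo_pos1 hs.le] at this
  omega

lemma ext'_eq_zero_of_pos1_lt_of_lt_pos1 {s : ℕ} {p : Fin k → Fin 2}
    (hs : s + 1 ≤ onesCount k p) {i : ℕ} (h₁ : pos1 k s p < i)
    (h₂ : i < pos1 k (s + 1) p) : ext' k p i = 0 := by
  have := ext'_le_one p i
  by_contra hi
  have hi1 : ext' k p i = 1 := by omega
  have := onesUpTo_lt h₁ hi1
  have := onesUpTo_lt h₂ (ext'_pos1 (by omega) hs).1
  rw [onesUpTo_pos1 (by omega)] at *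
  omega

end Positions

section Prefix

variable {k s : ℕ} {p q : Fin k → Fin 2}

lemma one_le_onesUpTo {m : ℕ} (h : ext' k p m = 1) : 1 ≤ onesUpTo k p m :=
  (onesUpTo_zero p ▸ onesUpTo_lt (le_of_ext'_eq_one h).1 h :)

lemma onesUpTo_congr {n : ℕ} (h : ∀ m ≤ n, ext' k q m = ext' k p m) :
    onesUpTo k q n = onesUpTo k p n :=
  sum_congr rfl fun m hm => h m (mem_Icc.1 hm).2

lemma pos1_eq_of_ext'_eq (hs : s ≤ onesCount k p)
    (h : ∀ m ≤ pos1 k s p, ext' k q m = ext' k p m) {i : ℕ} (hi : i ∈ Icc 1 s) :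
    pos1 k i q = pos1 k i p := by
  obtain ⟨hi1, his⟩ := mem_Icc.1 hi
  obtain ⟨hm, hmi⟩ := ext'_pos1 hi1 (his.trans hs)
  have hle : pos1 k i p ≤ pos1 k s p :=
    le_of_onesUpTo_le hm (by rwa [hmi, onesUpTo_pos1 hs])
  refine pos1_eq_of_onesUpTo_eq (by rw [h _ hle, hm]) ?_
  rw [onesUpTo_congr fun m hm' => h m (hm'.trans hle), hmi]

lemma ext'_eq_one_of_pos1_eq (hp : s ≤ onesCount k p) (hq : s ≤ onesCount k q)
    (h : ∀ i ∈ Icc 1 s, pos1 k i q = pos1 k i p) {m : ℕ} (hm : m ≤ pos1 k s p)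
    (h1 : ext' k p m = 1) : ext' k q m = 1 := by
  have hi1 := one_le_onesUpTo h1
  have his : onesUpTo k p m ≤ s := onesUpTo_pos1 hp ▸ onesUpTo_mono p hm
  have hpos := h _ (mem_Icc.2 ⟨hi1, his⟩)
  rw [pos1_eq_of_onesUpTo_eq h1 rfl] at hpos
  exact hpos ▸ (ext'_pos1 hi1 (his.trans hq)).1

lemma ext'_eq_of_pos1_eq (hp : s ≤ onesCount k p) (hq : s ≤ onesCount k q)
    (h : ∀ i ∈ Icc 1 s, pos1 k i q = pos1 k i p) {m : ℕ} (hm : m ≤ pos1 k s p) :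
    ext' k q m = ext' k p m := by
  have hpq : pos1 k s q = pos1 k s p := by
    rcases Nat.eq_zero_or_pos s with rfl | hs0
    · rw [pos1_zero, pos1_zero]
    · exact h s (mem_Icc.2 ⟨hs0, le_rfl⟩)
  have := ext'_le_one p m
  have := ext'_le_one q m
  have := ext'_eq_one_of_pos1_eq hp hq h hm
  have := ext'_eq_one_of_pos1_eq hq hp (fun i hi => (h i hi).symm) (hpq ▸ hm)
  omega

end Prefix

section SetOne

variable {k : ℕ}

def truncate (k t : ℕ) (p : Fin k → Fin 2) : Fin k → Fin 2 := fun m =>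
  if (m : ℕ) + 1 ≤ t then p m else 0

def setOne (k : ℕ) (p : Fin k → Fin 2) (j : ℕ) : Fin k → Fin 2 := fun m =>
  if (m : ℕ) + 1 = j then 1 else p m

lemma ext'_truncate (t : ℕ) (p : Fin k → Fin 2) (i : ℕ) :
    ext' k (truncate k t p) i = if i ≤ t then ext' k p i else 0 := by
  unfold ext' truncate
  split_ifs <;> simp only [Fin.val_zero] at * <;> omega

lemma ext'_truncate_of_lt {t i : ℕ} (p : Fin k → Fin 2) (h : t < i) :
    ext' k (truncate k t p) i = 0 := by
  rw [ext'_truncate, if_neg h.not_ge]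

lemma ext'_setOne {p : Fin k → Fin 2} {j : ℕ} (hj : 1 ≤ j) (hjk : j ≤ k)
    (hp : ext' k p j = 0) (i : ℕ) :
    ext' k (setOne k p j) i = ext' k p i + if i = j then 1 else 0 := by
  unfold ext' setOne at *
  rcases eq_or_ne i j with rfl | hij
  · simp_all
  · split_ifs at * <;> (try simp only [Fin.val_one] at *) <;> omega

lemma onesCount_truncate {t : ℕ} (ht : t ≤ k) (p : Fin k → Fin 2) :
    onesCount k (truncate k t p) = onesUpTo k p t := by
  rw [← onesUpTo_self, onesUpTo, onesUpTo]
  simp_rw [ext'_truncate, ← sum_filter]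
  congr 1
  ext i
  simp only [mem_filter, mem_Icc]
  omega

lemma onesCount_setOne {p : Fin k → Fin 2} {j : ℕ} (hj : 1 ≤ j) (hjk : j ≤ k)
    (hp : ext' k p j = 0) : onesCount k (setOne k p j) = onesCount k p + 1 := by
  rw [← onesUpTo_self, ← onesUpTo_self, onesUpTo, onesUpTo]
  simp_rw [ext'_setOne hj hjk hp, sum_add_distrib, sum_ite_eq']
  simp [hj, hjk]

lemma injOn_setOne_truncate (t : ℕ) (p : Fin k → Fin 2) :
    Set.InjOn (setOne k (truncate k t p)) (Icc (t + 1) k : Finset ℕ) := by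
  intro a ha b hb hab
  obtain ⟨hta, hak⟩ := mem_Icc.1 ha
  obtain ⟨htb, hbk⟩ := mem_Icc.1 hb
  have := congrArg (ext' k · a) hab
  simp only [ext'_setOne (by omega) hak (ext'_truncate_of_lt p hta),
    ext'_setOne (by omega) hbk (ext'_truncate_of_lt p htb), ext'_truncate_of_lt p hta] at this
  by_contra hne
  simp [hne] at this

lemma exists_eq_setOne_truncate {q : Fin k → Fin 2} {t : ℕ}
    (hq : onesCount k q = onesUpTo k q t + 1) :
    ∃ j ∈ Icc (t + 1) k, q = setOne k (truncate k t q) j := by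
  obtain ⟨hj, hjs⟩ := ext'_pos1 (le_add_self) hq.ge
  set j := pos1 k (onesUpTo k q t + 1) q
  obtain ⟨hj1, hjk⟩ := le_of_ext'_eq_one hj
  have htj : t < j := by
    by_contra! hjt
    have := onesUpTo_mono q hjt
    omega
  refine ⟨j, mem_Icc.2 ⟨htj, hjk⟩, eq_of_ext'_eq fun i => ?_⟩
  rw [ext'_setOne hj1 hjk (ext'_truncate_of_lt q htj), ext'_truncate]
  by_cases hit : i ≤ t
  · rw [if_pos hit, if_neg (by omega), add_zero]
  rw [if_neg hit, zero_add]
  split_ifs with hij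
  · rwa [hij]
  · have := ext'_le_one q i
    by_contra hi
    have hi1 : ext' k q i = 1 := by omega
    have := onesUpTo_lt (not_le.1 hit) hi1
    have := onesUpTo_le_onesCount (p := q) (le_of_ext'_eq_one hi1).2
    exact hij (le_antisymm (le_of_onesUpTo_le hi1 (by omega)) (le_of_onesUpTo_le hj (by omega)))

lemma update_last_eq_truncate {s : ℕ} {p : Fin k → Fin 2} (hp : onesCount k p = s + 1)
    (hpk : ext' k p k = 1) :
    (fun m : Fin k => if (m : ℕ) + 1 = k then 0 else p m) = truncate k (pos1 k s p) p := by
  have hlast : pos1 k (s + 1) p = k :=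
    pos1_eq_of_onesUpTo_eq hpk (by rw [onesUpTo_self, hp])
  funext m
  unfold truncate
  split_ifs with hmk hms hms
  · have := pos1_lt (p := p) (s := s) (by omega)
    omega
  · rfl
  · rfl
  · refine Fin.val_injective ?_
    rw [← ext'_succ, ext'_eq_zero_of_pos1_lt_of_lt_pos1 hp.ge (by omega) (by omega)]
    rfl

end SetOne

-- Classical, so that the filter carries the same decidability instance as in `stmt17`.
open scoped Classical in
lemma filter_pos1_eq_eq_image {k s : ℕ} (p : Fin k → Fin 2) (hs : s ≤ onesCount k p) :
    univ.filter (fun q : Fin k → Fin 2 => onesCount k q = s + 1 ∧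
        ∀ i ∈ Icc 1 s, pos1 k i q = pos1 k i p) =
      (Icc (pos1 k s p + 1) k).image (setOne k (truncate k (pos1 k s p) p)) := by
  set t := pos1 k s p
  ext q
  simp only [mem_filter, mem_univ, true_and, mem_image]
  constructor
  · rintro ⟨hq, hpos⟩
    have hpre : ∀ m ≤ t, ext' k q m = ext' k p m := fun m =>
      ext'_eq_of_pos1_eq hs (by omega) hpos
    have htrunc : truncate k t q = truncate k t p :=
      eq_of_ext'_eq fun i => by
        simp only [ext'_truncate]
        split_ifs with hi
        exacts [hpre i hi, rfl]
    obtain ⟨j, hj, hqj⟩ := exists_eq_setOne_truncate (t := t)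
      (by rw [onesUpTo_congr hpre, onesUpTo_pos1 hs, hq])
    exact ⟨j, hj, by rw [hqj, htrunc]⟩
  · rintro ⟨j, hj, rfl⟩
    obtain ⟨htj, hjk⟩ := mem_Icc.1 hj
    have hzero : ext' k (truncate k t p) j = 0 := ext'_truncate_of_lt p htj
    refine ⟨?_, fun i => pos1_eq_of_ext'_eq hs fun m hm => ?_⟩
    · rw [onesCount_setOne (by omega) hjk hzero, onesCount_truncate (by omega),
        onesUpTo_pos1 hs]
    · rw [ext'_setOne (by omega) hjk hzero, ext'_truncate, if_pos hm, if_neg (by omega), add_zero]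

section Weights

variable {k : ℕ} (N : ℕ → ℕ)

lemma lTerm_setOne {p : Fin k → Fin 2} {j : ℕ} (hj : 1 ≤ j) (hjk : j ≤ k)
    (hp : ext' k p j = 0) : lTerm k N (setOne k p j) = lTerm k N p * X ^ N j := by
  unfold lTerm
  simp_rw [← pow_add, ext'_setOne hj hjk hp, add_mul, sum_add_distrib, ite_mul, one_mul,
    zero_mul, sum_ite_eq']
  simp [hj, hjk]

lemma deltaR_setOne {p : Fin k → Fin 2} {j : ℕ} (hj : 1 ≤ j) (hjk : j ≤ k)
    (hp : ext' k p j = 0) (hp' : ext' k p (j + 1) = 0) :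
    deltaR k N (setOne k p j) = deltaR k N p *
      if 2 ≤ j ∧ ext' k p (j - 1) = 0 then 1 - X ^ (N (j - 1) - N j) else 1 := by
  have hfactor : ∀ i, 1 ≤ i →
      (1 - if ext' k (setOne k p j) i = 0 ∧ ext' k (setOne k p j) (i + 1) = 1
        then (X : ℤ[X]) ^ (N i - N (i + 1)) else 0) =
      (1 - if ext' k p i = 0 ∧ ext' k p (i + 1) = 1 then X ^ (N i - N (i + 1)) else 0) *
        if i + 1 = j ∧ 1 ≤ i ∧ ext' k p i = 0 then 1 - X ^ (N i - N (i + 1)) else 1 := by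
    intro i hi
    rw [ext'_setOne hj hjk hp, ext'_setOne hj hjk hp]
    by_cases hij : i + 1 = j
    · subst hij
      by_cases hpi : ext' k p i = 0 <;> simp [hp, hpi, hi]
    by_cases hij' : i = j
    · subst hij'
      simp [hp, hp']
    simp [hij, hij']
  unfold deltaR
  rw [prod_congr rfl fun i hi => hfactor i (mem_Icc.1 hi).1, prod_mul_distrib]
  congr 1
  rw [prod_eq_single (j - 1)]
  · simp only [Nat.sub_add_cancel hj, true_and, show 1 ≤ j - 1 ↔ 2 ≤ j by omega]
  · intro i _ hi
    rw [if_neg (by omega)]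
  · intro hj'
    rw [if_neg (by simp at hj'; omega)]

lemma lTerm_mul_deltaR_setOne_truncate_pos1 {s : ℕ} {p : Fin k → Fin 2}
    (hs : s ≤ onesCount k p) {j : ℕ}
    (hj : j ∈ Icc (pos1 k s p + 1) k) :
    lTerm k N (setOne k (truncate k (pos1 k s p) p) j) *
        deltaR k N (setOne k (truncate k (pos1 k s p) p) j) =
      lTerm k N (truncate k (pos1 k s p) p) * deltaR k N (truncate k (pos1 k s p) p) *
        (X ^ N j * if pos1 k s p + 1 < j then 1 - X ^ (N (j - 1) - N j) else 1) := by
  obtain ⟨htj, hjk⟩ := mem_Icc.1 hj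
  -- For `j = pos1 k s p + 1`, position `j - 1` holds the `s`-th one, or is `0` when `s = 0`.
  have hprev : (2 ≤ j ∧ ext' k (truncate k (pos1 k s p) p) (j - 1) = 0) ↔
      pos1 k s p + 1 < j := by
    rcases htj.eq_or_lt with rfl | hlt
    · simp only [lt_irrefl, iff_false, Nat.add_sub_cancel, not_and]
      intro h2
      rcases Nat.eq_zero_or_pos s with rfl | hs0
      · simp [pos1_zero] at h2
      · rw [ext'_truncate, if_pos le_rfl, (ext'_pos1 hs0 hs).1]
        exact one_ne_zero
    · exact iff_of_true ⟨by omega, ext'_truncate_of_lt _ (by omega)⟩ hlt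
  rw [lTerm_setOne N (by omega) hjk (ext'_truncate_of_lt _ htj),
    deltaR_setOne N (by omega) hjk (ext'_truncate_of_lt _ htj)
      (ext'_truncate_of_lt _ (by omega)), if_congr hprev rfl rfl]
  ring

end Weights

lemma sum_Icc_pow_mul_one_sub_pow {R : Type*} [CommRing R] (x : R) (N : ℕ → ℕ) {a b : ℕ}
    (hab : a ≤ b) (hN : ∀ i, a ≤ i → i < b → N (i + 1) ≤ N i) :
    ∑ j ∈ Icc a b, x ^ N j * (if a < j then 1 - x ^ (N (j - 1) - N j) else 1) = x ^ N b := by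
  induction b, hab using Nat.le_induction with
  | base => simp
  | succ b hab ih =>
    have hNb : N (b + 1) + (N b - N (b + 1)) = N b := by
      have := hN b hab (by omega)
      omega
    rw [sum_Icc_succ_top (by omega), ih fun i hi hib => hN i hi (by omega),
      if_pos (by omega), Nat.add_sub_cancel, mul_sub, mul_one, ← pow_add, hNb]
    ring

open Matrix

open scoped Classical

theorem stmt17_general (k s : ℕ) (N1 : ℕ → ℕ)
    (hN1 : ∀ i, 1 ≤ i → i ≤ k → N1 (i + 1) ≤ N1 i)
    (p' : Fin k → Fin 2) (hp1 : onesCount k p' = s + 1) (hpk : ext' k p' k = 1) :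
    ∑ p'' ∈ Finset.univ.filter
        (fun p'' : Fin k → Fin 2 => onesCount k p'' = s + 1 ∧
          ∀ i ∈ Finset.Icc 1 s, pos1 k i p'' = pos1 k i p'),
      lTerm k N1 p'' * deltaR k N1 p'' =
    lTerm k N1 (fun m => if (m : ℕ) + 1 = k then 0 else p' m) *
      deltaR k N1 (fun m => if (m : ℕ) + 1 = k then 0 else p' m) *
      Polynomial.X ^ N1 k := by
  have htk : pos1 k s p' < k := pos1_lt (by omega)
  rw [update_last_eq_truncate hp1 hpk, filter_pos1_eq_eq_image p' (by omega),
    sum_image (injOn_setOne_truncate _ _),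
    sum_congr rfl fun j hj => lTerm_mul_deltaR_setOne_truncate_pos1 N1 (by omega) hj,
    ← mul_sum, sum_Icc_pow_mul_one_sub_pow _ _ htk fun i hi hik => hN1 i (by omega) hik.le]

/-- Equation (lem_0_eq2): summing `l¹_{p''} δ¹_{p''}` over the class of `p'`
(tuples with `s+1` ones sharing the positions of the first `s` ones with `p'`)
gives `l¹_p δ¹_p q^{N_{1,k}}`, where `p` is `p'` with its last coordinate set to `0`. -/
theorem stmt17 (k s : ℕ) (hk : 1 ≤ k) (N1 : ℕ → ℕ)
    (hN1 : ∀ i, 1 ≤ i → i ≤ k → N1 (i + 1) ≤ N1 i)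
    (hN1z : ∀ i, k < i → N1 i = 0)
    (p' : Fin k → Fin 2) (hp1 : onesCount k p' = s + 1) (hpk : ext' k p' k = 1) :
    ∑ p'' ∈ Finset.univ.filter
        (fun p'' : Fin k → Fin 2 => onesCount k p'' = s + 1 ∧
          ∀ i ∈ Finset.Icc 1 s, pos1 k i p'' = pos1 k i p'),
      lTerm k N1 p'' * deltaR k N1 p'' =
    lTerm k N1 (fun m => if (m : ℕ) + 1 = k then 0 else p' m) *
      deltaR k N1 (fun m => if (m : ℕ) + 1 = k then 0 else p' m) *
      Polynomial.X ^ N1 k :=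
  stmt17_general k s N1 hN1 p' hp1 hpk
end
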